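/- Let M > 0 and let g ∈ X₁ with ‖g‖_∞ ≤ M. Define B(x) = κ / (x · h⁻¹(x) · ((h⁻¹)'(x))²) for x ≠ 0 (so B = F'/(h⁻¹)'). Then there exist constants 0 < c₁ ≤ c₂ depending only on μ, ν, M such that c₁ |x|^(1−3ν) ≤ B(x) ≤ c₂ |x|^(1−3ν) for 0 < |x| ≤ 1, and c₁ |x|^(1−3μ) ≤ B(x) ≤ c₂ |x|^(1−3μ) for |x| ≥ 1. -/

import Mathlib

/-!
Uniformly in `g` with `‖g‖_∞ ≤ M`, each factor of `x · h⁻¹(x) · (h⁻¹)'(x)^k` (`x > 0`) lies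
within constant factors of a broken power law, `x^a` on `(0, 1]` and `x^b` on `[1, ∞)`. For
`(h⁻¹)'` this is read off its formula, since `e^g ∈ [e^(-M), e^M]` and
`(x² + 1)^s ≍ max(1, x)^(2s)`; it passes to the primitive `h⁻¹` because `0 < ν ≤ μ`. Such
two-sided bounds multiply, divide and integrate. For `k = 1` they pin `∫_ℝ 1/(x h⁻¹ (h⁻¹)')`
between positive multiples of the integral of the broken power law with exponents `-2ν`, `-2μ`,
finite exactly because `ν < 1/2 < μ`; this bounds `κ`. For `k = 2` they give
`B ≍ x^(1-3ν)` on `(0, 1]` and `B ≍ x^(1-3μ)` on `[1, ∞)`, and `B` is even.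
-/

open MeasureTheory Real Filter Set Bornology

/-- `h⁻¹(x) = ∫₀ˣ |y|^(ν−1)(y²+1)^((μ−ν)/2) e^(g(y)) dy`. -/
noncomputable def hInv (μ ν : ℝ) (g : ℝ → ℝ) (x : ℝ) : ℝ :=
  ∫ y in (0:ℝ)..x, |y| ^ (ν - 1) * (y ^ 2 + 1) ^ ((μ - ν) / 2) * Real.exp (g y)

/-- `(h⁻¹)'(x) = |x|^(ν−1)(x²+1)^((μ−ν)/2) e^(g(x))`. -/
noncomputable def hInvDeriv (μ ν : ℝ) (g : ℝ → ℝ) (x : ℝ) : ℝ :=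
  |x| ^ (ν - 1) * (x ^ 2 + 1) ^ ((μ - ν) / 2) * Real.exp (g x)

/-- The constant `κ = κ(g)` determined by `∫_ℝ κ/(x h⁻¹(x) (h⁻¹)'(x)) dx = (μ−ν)π`. -/
noncomputable def kappa (μ ν : ℝ) (g : ℝ → ℝ) : ℝ :=
  (μ - ν) * Real.pi / ∫ x : ℝ, 1 / (x * hInv μ ν g x * hInvDeriv μ ν g x)

/-- `F'(x) = κ/(x h⁻¹(x) (h⁻¹)'(x))`. -/
noncomputable def Fder (μ ν : ℝ) (g : ℝ → ℝ) (x : ℝ) : ℝ :=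
  kappa μ ν g / (x * hInv μ ν g x * hInvDeriv μ ν g x)

/-- `F = F_g`, the antiderivative of `Fder` with `F(+∞) = 0`. -/
noncomputable def Fg (μ ν : ℝ) (g : ℝ → ℝ) (x : ℝ) : ℝ :=
  -∫ y in Set.Ioi x, Fder μ ν g y

/-- `θ(x)`: the continuous branch of `arg (x − i)`, i.e. `arctan(−1/x)` for `x > 0`,
`arctan(−1/x) − π` for `x < 0`, and `−π/2` at `x = 0`. -/
noncomputable def theta (x : ℝ) : ℝ :=
  if x = 0 then -(Real.pi / 2)
  else if x < 0 then Real.arctan (-1 / x) - Real.pi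
  else Real.arctan (-1 / x)

/-- `HasHilbertAt f x v`: the principal value `(1/π) lim_{ε→0⁺} ∫_{|x−y|>ε} f(y)/(x−y) dy`
exists and equals `v`. -/
def HasHilbertAt (f : ℝ → ℝ) (x v : ℝ) : Prop :=
  Filter.Tendsto
    (fun ε : ℝ => (1 / Real.pi) * ∫ y in {y : ℝ | ε < |x - y|}, f y / (x - y))
    (nhdsWithin 0 (Set.Ioi 0)) (nhds v)

/-- `G(x) = g(x) + (1/2)(μ−ν) ln(x²+1)`. -/
noncomputable def Gfun (μ ν : ℝ) (g : ℝ → ℝ) (x : ℝ) : ℝ :=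
  g x + (1 / 2) * (μ - ν) * Real.log (x ^ 2 + 1)

/-- `g` is a solution of system (3.12): `g` is bounded and continuous, the principal
value `T[g](x) = H(F_g − (μ−ν)θ)(x)` exists for every `x`, and `g = T[g]`. -/
def IsSolution (μ ν : ℝ) (g : ℝ → ℝ) : Prop :=
  Continuous g ∧ (∃ M : ℝ, ∀ x, |g x| ≤ M) ∧
    ∀ x : ℝ, HasHilbertAt (fun y => Fg μ ν g y - (μ - ν) * theta y) x (g x)
/-- `B(x) = κ/(x h⁻¹(x) ((h⁻¹)'(x))²)`, i.e. `B = F'/(h⁻¹)' = b' ∘ h⁻¹`. -/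
noncomputable def Bfun (μ ν : ℝ) (g : ℝ → ℝ) (x : ℝ) : ℝ :=
  kappa μ ν g / (x * hInv μ ν g x * (hInvDeriv μ ν g x) ^ 2)

def Comparable {α : Type*} (s : Set α) (c C : ℝ) (w f : α → ℝ) : Prop :=
  ∀ x ∈ s, c * w x ≤ f x ∧ f x ≤ C * w x

namespace Comparable

variable {α : Type*} {s : Set α} {c C d D : ℝ} {w v f h : α → ℝ}

theorem congr (hf : Comparable s c C w f) (hwv : EqOn w v s) : Comparable s c C v f :=
  fun x hx => hwv hx ▸ hf x hx

theorem nonneg (hf : Comparable s c C w f) (hc : 0 ≤ c) (hw : ∀ x ∈ s, 0 ≤ w x) {x : α}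
    (hx : x ∈ s) : 0 ≤ f x :=
  (mul_nonneg hc (hw x hx)).trans (hf x hx).1

theorem mono (hf : Comparable s c C w f) (hd : d ≤ c) (hD : C ≤ D) (hw : ∀ x ∈ s, 0 ≤ w x) :
    Comparable s d D w f := fun x hx =>
  ⟨(mul_le_mul_of_nonneg_right hd (hw x hx)).trans (hf x hx).1,
    (hf x hx).2.trans (mul_le_mul_of_nonneg_right hD (hw x hx))⟩

theorem trans (hf : Comparable s c C w f) (hw : Comparable s d D v w) (hc : 0 ≤ c)
    (hC : 0 ≤ C) : Comparable s (c * d) (C * D) v f := fun x hx =>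
  ⟨by rw [mul_assoc]; exact (mul_le_mul_of_nonneg_left (hw x hx).1 hc).trans (hf x hx).1,
    by rw [mul_assoc]; exact (hf x hx).2.trans (mul_le_mul_of_nonneg_left (hw x hx).2 hC)⟩

theorem mul (hf : Comparable s c C w f) (hh : Comparable s d D v h) (hc : 0 ≤ c) (hd : 0 ≤ d)
    (hw : ∀ x ∈ s, 0 ≤ w x) (hv : ∀ x ∈ s, 0 ≤ v x) :
    Comparable s (c * d) (C * D) (w * v) (f * h) := fun x hx => by
  obtain ⟨hf₁, hf₂⟩ := hf x hx
  obtain ⟨hh₁, hh₂⟩ := hh x hx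
  have hcw := mul_nonneg hc (hw x hx)
  have hdv := mul_nonneg hd (hv x hx)
  simp only [Pi.mul_apply]
  constructor
  · calc c * d * (w x * v x) = (c * w x) * (d * v x) := by ring
      _ ≤ f x * h x := mul_le_mul hf₁ hh₁ hdv (hcw.trans hf₁)
  · calc f x * h x ≤ (C * w x) * (D * v x) :=
          mul_le_mul hf₂ hh₂ (hdv.trans hh₁) ((hcw.trans hf₁).trans hf₂)
      _ = C * D * (w x * v x) := by ring

theorem pow (hf : Comparable s c C w f) (hc : 0 ≤ c) (hw : ∀ x ∈ s, 0 ≤ w x) (n : ℕ) :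
    Comparable s (c ^ n) (C ^ n) (w ^ n) (f ^ n) := fun x hx => by
  obtain ⟨hf₁, hf₂⟩ := hf x hx
  have hcw := mul_nonneg hc (hw x hx)
  simp only [Pi.pow_apply, ← mul_pow]
  exact ⟨pow_le_pow_left₀ hcw hf₁ n, pow_le_pow_left₀ (hcw.trans hf₁) hf₂ n⟩

theorem const_div (hf : Comparable s c C w f) (hc : 0 < c) (hw : ∀ x ∈ s, 0 < w x) {k l L : ℝ}
    (hl : 0 ≤ l) (hk : k ∈ Icc l L) :
    Comparable s (l / C) (L / c) (fun x => (w x)⁻¹) (fun x => k / f x) := fun x hx => by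
  obtain ⟨hf₁, hf₂⟩ := hf x hx
  have hcw := mul_pos hc (hw x hx)
  constructor
  · calc l / C * (w x)⁻¹ = l / (C * w x) := by rw [div_mul_eq_div_div, div_eq_mul_inv (l / C)]
      _ ≤ k / f x := div_le_div₀ (hl.trans hk.1) hk.1 (hcw.trans_le hf₁) hf₂
  · calc k / f x ≤ L / (c * w x) := div_le_div₀ (hl.trans (hk.1.trans hk.2)) hk.2 hcw hf₁
      _ = L / c * (w x)⁻¹ := by rw [div_mul_eq_div_div, div_eq_mul_inv (L / c)]

theorem setIntegral [MeasurableSpace α] {μ : Measure α} (hf : Comparable s c C w f)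
    (hs : MeasurableSet s) (hc : 0 ≤ c) (hw : ∀ x ∈ s, 0 ≤ w x) (hwi : IntegrableOn w s μ)
    (hfm : AEStronglyMeasurable f (μ.restrict s)) :
    c * ∫ x in s, w x ∂μ ≤ ∫ x in s, f x ∂μ ∧ ∫ x in s, f x ∂μ ≤ C * ∫ x in s, w x ∂μ := by
  have hfi : IntegrableOn f s μ := by
    refine Integrable.mono' (hwi.const_mul C) hfm ?_
    filter_upwards [ae_restrict_mem hs] with x hx
    rw [Real.norm_eq_abs, abs_of_nonneg (hf.nonneg hc hw hx)]
    exact (hf x hx).2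
  rw [← MeasureTheory.integral_const_mul, ← MeasureTheory.integral_const_mul]
  exact ⟨setIntegral_mono_on (hwi.const_mul c) hfi hs fun x hx => (hf x hx).1,
    setIntegral_mono_on hfi (hwi.const_mul C) hs fun x hx => (hf x hx).2⟩

theorem primitive {w f : ℝ → ℝ} (hf : Comparable (Ioi 0) c C w f)
    (hfi : ∀ x, IntervalIntegrable f volume 0 x) (hwi : ∀ x, IntervalIntegrable w volume 0 x) :
    Comparable (Ioi 0) c C (fun x => ∫ y in 0..x, w y) (fun x => ∫ y in 0..x, f y) :=
  fun x hx => by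
  rw [← intervalIntegral.integral_const_mul, ← intervalIntegral.integral_const_mul]
  exact ⟨intervalIntegral.integral_mono_on_of_le_Ioo hx.le ((hwi x).const_mul c) (hfi x)
      fun y hy => (hf y hy.1).1,
    intervalIntegral.integral_mono_on_of_le_Ioo hx.le (hfi x) ((hwi x).const_mul C)
      fun y hy => (hf y hy.1).2⟩

end Comparable

noncomputable def brokenPow (a b x : ℝ) : ℝ := if x ≤ 1 then x ^ a else x ^ b

section brokenPow

variable {a b a' b' x : ℝ}

theorem brokenPow_of_le_one (hx : x ≤ 1) : brokenPow a b x = x ^ a := if_pos hx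

theorem brokenPow_of_one_le (hx : 1 ≤ x) : brokenPow a b x = x ^ b := by
  unfold brokenPow
  split_ifs with h
  · rw [le_antisymm h hx, one_rpow, one_rpow]
  · rfl

theorem brokenPow_self : brokenPow a a x = x ^ a := ite_self _

theorem brokenPow_pos (hx : 0 < x) : 0 < brokenPow a b x := by
  unfold brokenPow; split_ifs <;> positivity

theorem brokenPow_mul (hx : 0 < x) :
    brokenPow a b x * brokenPow a' b' x = brokenPow (a + a') (b + b') x := by
  unfold brokenPow; split_ifs <;> rw [rpow_add hx]

theorem brokenPow_pow (hx : 0 < x) (n : ℕ) :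
    brokenPow a b x ^ n = brokenPow (n * a) (n * b) x := by
  unfold brokenPow; split_ifs <;> rw [← rpow_natCast, ← rpow_mul hx.le, mul_comm]

theorem brokenPow_inv (hx : 0 < x) : (brokenPow a b x)⁻¹ = brokenPow (-a) (-b) x := by
  unfold brokenPow; split_ifs <;> rw [rpow_neg hx.le]

theorem intervalIntegrable_brokenPow (ha : -1 < a) (x : ℝ) :
    IntervalIntegrable (brokenPow a b) volume 0 x := by
  have below : ∀ y ≤ 1, IntervalIntegrable (brokenPow a b) volume 0 y := fun y hy =>
    (intervalIntegral.intervalIntegrable_rpow' ha).congr fun z hz =>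
      (brokenPow_of_le_one ((uIoc_subset_uIcc hz).2.trans (max_le zero_le_one hy))).symm
  rcases le_or_gt x 1 with hx | hx
  · exact below x hx
  · refine (below 1 le_rfl).trans ?_
    refine ((continuousOn_id.rpow_const (p := b) fun y hy => Or.inl ?_).intervalIntegrable).congr ?_
    · rw [uIcc_of_le hx.le] at hy
      exact (zero_lt_one.trans_le hy.1).ne'
    · intro y hy
      rw [uIoc_of_le hx.le] at hy
      exact (brokenPow_of_one_le hy.1.le).symm

theorem integral_brokenPow_of_le_one (ha : 0 < a) (hx : 0 ≤ x) (hx1 : x ≤ 1) :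
    ∫ y in 0..x, brokenPow (a - 1) (b - 1) y = x ^ a / a := by
  rw [intervalIntegral.integral_congr (g := fun y => y ^ (a - 1)) fun y hy => by
      rw [uIcc_of_le hx] at hy
      exact brokenPow_of_le_one (hy.2.trans hx1),
    integral_rpow (Or.inl (by linarith)), sub_add_cancel, zero_rpow ha.ne', sub_zero]

theorem integral_brokenPow_of_one_le (ha : 0 < a) (hb : 0 < b) (hx : 1 ≤ x) :
    ∫ y in 0..x, brokenPow (a - 1) (b - 1) y = a⁻¹ + (x ^ b - 1) / b := by
  have hi := intervalIntegrable_brokenPow (b := b - 1) (by linarith : -1 < a - 1)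
  rw [← intervalIntegral.integral_add_adjacent_intervals (hi 1) ((hi 1).symm.trans (hi x)),
    integral_brokenPow_of_le_one ha zero_le_one le_rfl, one_rpow, one_div,
    intervalIntegral.integral_congr (g := fun y => y ^ (b - 1)) fun y hy => by
      rw [uIcc_of_le hx] at hy
      exact brokenPow_of_one_le hy.1,
    integral_rpow (Or.inl (by linarith)), sub_add_cancel, one_rpow]

theorem comparable_primitive_brokenPow (ha : 0 < a) (hab : a ≤ b) :
    Comparable (Ioi 0) b⁻¹ a⁻¹ (brokenPow a b)
      (fun x => ∫ y in 0..x, brokenPow (a - 1) (b - 1) y) := fun x hx => by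
  have hba : b⁻¹ ≤ a⁻¹ := inv_anti₀ ha hab
  dsimp only
  rcases le_total x 1 with hx1 | hx1
  · rw [integral_brokenPow_of_le_one ha hx.le hx1, brokenPow_of_le_one hx1, div_eq_inv_mul]
    have := rpow_nonneg hx.le a
    exact ⟨by nlinarith, le_rfl⟩
  · rw [integral_brokenPow_of_one_le ha (ha.trans_le hab) hx1, brokenPow_of_one_le hx1,
      div_eq_mul_inv]
    have := one_le_rpow hx1 (ha.trans_le hab).le
    constructor <;> nlinarith

theorem integrableOn_brokenPow (ha : -1 < a) (hb : b < -1) :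
    IntegrableOn (brokenPow a b) (Ioi 0) := by
  rw [← Ioc_union_Ioi_eq_Ioi zero_le_one]
  exact (intervalIntegrable_brokenPow ha 1).1.union <|
    (integrableOn_Ioi_rpow_of_lt hb one_pos).congr_fun
      (fun y hy => (brokenPow_of_one_le (le_of_lt hy)).symm) measurableSet_Ioi

theorem setIntegral_brokenPow_pos (ha : -1 < a) (hb : b < -1) :
    0 < ∫ x in Ioi 0, brokenPow a b x := by
  have hsupp : Function.support (fun x => brokenPow a b x) ∩ Ioi 0 = Ioi 0 :=
    inter_eq_right.mpr fun x hx => (brokenPow_pos hx).ne'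
  rw [setIntegral_pos_iff_support_of_nonneg_ae
      ((ae_restrict_mem measurableSet_Ioi).mono fun x hx => (brokenPow_pos hx).le)
      (integrableOn_brokenPow ha hb), hsupp]
  simp

end brokenPow

namespace Comparable

variable {c C d D a b a' b' : ℝ} {f h : ℝ → ℝ}

theorem mul_brokenPow (hf : Comparable (Ioi 0) c C (brokenPow a b) f)
    (hh : Comparable (Ioi 0) d D (brokenPow a' b') h) (hc : 0 ≤ c) (hd : 0 ≤ d) :
    Comparable (Ioi 0) (c * d) (C * D) (brokenPow (a + a') (b + b')) (f * h) :=
  (hf.mul hh hc hd (fun _ hx => (brokenPow_pos hx).le) fun _ hx => (brokenPow_pos hx).le).congr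
    fun _ hx => brokenPow_mul hx

theorem pow_brokenPow (hf : Comparable (Ioi 0) c C (brokenPow a b) f) (hc : 0 ≤ c) (n : ℕ) :
    Comparable (Ioi 0) (c ^ n) (C ^ n) (brokenPow (n * a) (n * b)) (f ^ n) :=
  (hf.pow hc (fun _ hx => (brokenPow_pos hx).le) n).congr fun _ hx => brokenPow_pow hx n

theorem const_div_brokenPow (hf : Comparable (Ioi 0) c C (brokenPow a b) f) (hc : 0 < c)
    {k l L : ℝ} (hl : 0 ≤ l) (hk : k ∈ Icc l L) :
    Comparable (Ioi 0) (l / C) (L / c) (brokenPow (-a) (-b)) (fun x => k / f x) :=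
  (hf.const_div hc (fun _ hx => brokenPow_pos hx) hl hk).congr fun _ hx => brokenPow_inv hx

end Comparable

theorem comparable_id : Comparable (Ioi 0) 1 1 (brokenPow 1 1) fun x => x := fun x _ => by
  rw [brokenPow_self, rpow_one, one_mul]
  exact ⟨le_rfl, le_rfl⟩

theorem comparable_abs_rpow (r : ℝ) :
    Comparable (Ioi 0) 1 1 (brokenPow r r) fun x => |x| ^ r := fun x (hx : 0 < x) => by
  dsimp only
  rw [brokenPow_self, abs_of_pos hx, one_mul]
  exact ⟨le_rfl, le_rfl⟩

theorem comparable_sq_add_one_rpow {s : ℝ} (hs : 0 ≤ s) :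
    Comparable (Ioi 0) 1 (2 ^ s) (brokenPow 0 (2 * s)) fun x => (x ^ 2 + 1) ^ s :=
  fun x (hx : 0 < x) => by
  rw [one_mul]
  rcases le_total x 1 with hx1 | hx1
  · rw [brokenPow_of_le_one hx1, rpow_zero, mul_one]
    exact ⟨one_le_rpow (by nlinarith) hs, rpow_le_rpow (by positivity) (by nlinarith) hs⟩
  · rw [brokenPow_of_one_le hx1, rpow_mul hx.le, rpow_two, ← mul_rpow zero_le_two (sq_nonneg x)]
    exact ⟨rpow_le_rpow (sq_nonneg x) (by linarith) hs,
      rpow_le_rpow (by positivity) (by nlinarith) hs⟩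

theorem comparable_exp_comp {g : ℝ → ℝ} {M : ℝ} (hg : ∀ x, |g x| ≤ M) :
    Comparable (Ioi 0) (exp (-M)) (exp M) (brokenPow 0 0) fun x => exp (g x) := fun x _ => by
  rw [brokenPow_self, rpow_zero, mul_one, mul_one]
  exact ⟨exp_le_exp.mpr (neg_le_of_abs_le (hg x)), exp_le_exp.mpr (le_of_abs_le (hg x))⟩

theorem intervalIntegrable_abs_rpow {r : ℝ} (hr : -1 < r) (a b : ℝ) :
    IntervalIntegrable (fun x : ℝ => |x| ^ r) volume a b :=
  ((locallyIntegrable_of_norm_le_rpow (μ := volume) (f := fun x : ℝ => |x| ^ r) (C := 1)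
    (α := -r) (by simp) (by simp; linarith) (ae_of_all _ fun x => by simp [abs_rpow_of_nonneg])
    (by fun_prop : Measurable fun x : ℝ => |x| ^ r).aestronglyMeasurable).integrableOn_isCompact
      isCompact_uIcc).intervalIntegrable

theorem integral_eq_two_mul_setIntegral_Ioi_of_even {f : ℝ → ℝ} (hf : ∀ x, f (-x) = f x) :
    ∫ x, f x = 2 * ∫ x in Ioi 0, f x := by
  rw [← integral_comp_abs]
  congr 1 with x
  rcases abs_choice x with h | h <;> rw [h]
  exact (hf x).symm

section hInv

variable {μ ν M : ℝ} {g : ℝ → ℝ}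

theorem even_of_Gfun_even (hG : ∀ x, Gfun μ ν g (-x) = Gfun μ ν g x) (x : ℝ) :
    g (-x) = g x := by
  simpa [Gfun] using hG x

theorem hInvDeriv_neg (hg : ∀ x, g (-x) = g x) (x : ℝ) :
    hInvDeriv μ ν g (-x) = hInvDeriv μ ν g x := by
  simp [hInvDeriv, hg]

theorem hInv_neg (hg : ∀ x, g (-x) = g x) (x : ℝ) : hInv μ ν g (-x) = -hInv μ ν g x := by
  have h := intervalIntegral.integral_comp_neg (a := 0) (b := x) (hInvDeriv μ ν g)
  simp only [hInvDeriv_neg hg, neg_zero] at h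
  rw [show hInv μ ν g (-x) = ∫ y in 0..-x, hInvDeriv μ ν g y from rfl,
    intervalIntegral.integral_symm, ← h]
  rfl

theorem Bfun_abs (hg : ∀ x, g (-x) = g x) (x : ℝ) : Bfun μ ν g |x| = Bfun μ ν g x := by
  rcases abs_choice x with h | h <;> rw [h]
  simp only [Bfun, hInv_neg hg, hInvDeriv_neg hg, neg_mul_neg]

theorem intervalIntegrable_hInvDeriv (hν : 0 < ν) (hg : Continuous g) (a b : ℝ) :
    IntervalIntegrable (hInvDeriv μ ν g) volume a b :=
  ((intervalIntegrable_abs_rpow (by linarith) a b).mul_continuousOn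
    ((by fun_prop : Continuous fun x : ℝ => x ^ 2 + 1).rpow_const
      fun x => Or.inl (by positivity)).continuousOn).mul_continuousOn
    (by fun_prop)

theorem continuous_hInv (hν : 0 < ν) (hg : Continuous g) : Continuous (hInv μ ν g) :=
  intervalIntegral.continuous_primitive (intervalIntegrable_hInvDeriv hν hg) 0

theorem measurable_hInvDeriv (hg : Measurable g) : Measurable (hInvDeriv μ ν g) := by
  unfold hInvDeriv; fun_prop

theorem comparable_hInvDeriv (hνμ : ν ≤ μ) (hg : ∀ x, |g x| ≤ M) :
    Comparable (Ioi 0) (exp (-M)) (2 ^ ((μ - ν) / 2) * exp M) (brokenPow (ν - 1) (μ - 1))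
      (hInvDeriv μ ν g) := by
  have h := ((comparable_abs_rpow (ν - 1)).mul_brokenPow
    (comparable_sq_add_one_rpow (by linarith : 0 ≤ (μ - ν) / 2)) zero_le_one
      zero_le_one).mul_brokenPow (comparable_exp_comp hg) (by norm_num) (exp_pos _).le
  rw [one_mul, one_mul, one_mul] at h
  convert h using 2 <;> first | rfl | ring

theorem comparable_hInv (hν : 0 < ν) (hνμ : ν ≤ μ) (hgc : Continuous g) (hgb : ∀ x, |g x| ≤ M) :
    Comparable (Ioi 0) (exp (-M) * μ⁻¹) (2 ^ ((μ - ν) / 2) * exp M * ν⁻¹) (brokenPow ν μ)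
      (hInv μ ν g) :=
  ((comparable_hInvDeriv hνμ hgb).primitive (intervalIntegrable_hInvDeriv hν hgc 0)
    (intervalIntegrable_brokenPow (by linarith))).trans (comparable_primitive_brokenPow hν hνμ)
    (exp_pos _).le (by positivity)

end hInv

section Uniform

variable {μ ν : ℝ}

theorem exists_comparable_mul_hInv_mul_hInvDeriv_pow (hν : 0 < ν) (hνμ : ν ≤ μ) (M : ℝ)
    (k : ℕ) :
    ∃ c C, 0 < c ∧ 0 < C ∧ ∀ g : ℝ → ℝ, Continuous g → (∀ x, |g x| ≤ M) →
      Comparable (Ioi 0) c C (brokenPow (1 + ν + k * (ν - 1)) (1 + μ + k * (μ - 1)))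
        fun x => x * hInv μ ν g x * hInvDeriv μ ν g x ^ k := by
  have hμ : 0 < μ := hν.trans_le hνμ
  refine ⟨_, _, ?_, ?_, fun g hgc hgb =>
    (comparable_id.mul_brokenPow (comparable_hInv hν hνμ hgc hgb) zero_le_one
      (by positivity)).mul_brokenPow ((comparable_hInvDeriv hνμ hgb).pow_brokenPow
        (exp_pos _).le k) (by positivity) (by positivity)⟩ <;> positivity

theorem exists_kappa_mem_Icc (hμ : 1 / 2 < μ) (hν : 0 < ν) (hν2 : ν < 1 / 2) (M : ℝ) :
    ∃ l L, 0 < l ∧ ∀ g : ℝ → ℝ, Continuous g → (∀ x, g (-x) = g x) → (∀ x, |g x| ≤ M) →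
      kappa μ ν g ∈ Icc l L := by
  obtain ⟨c, C, hc, hC, hS⟩ :=
    exists_comparable_mul_hInv_mul_hInvDeriv_pow (μ := μ) hν (by linarith) M 1
  simp only [Nat.cast_one, one_mul, pow_one] at hS
  have ha : -1 < -(1 + ν + (ν - 1)) := by linarith
  have hb : -(1 + μ + (μ - 1)) < -1 := by linarith
  set Φ := ∫ x in Ioi 0, brokenPow (-(1 + ν + (ν - 1))) (-(1 + μ + (μ - 1))) x with hΦ_def
  have hΦ : 0 < Φ := setIntegral_brokenPow_pos ha hb
  have hA : 0 < (μ - ν) * π := mul_pos (by linarith) pi_pos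
  -- `κ = (μ - ν) π / (2 J)` with `J` the integral over `(0, ∞)`, and `Φ / C ≤ J ≤ Φ / c`.
  refine ⟨(μ - ν) * π / (2 * (1 / c * Φ)), (μ - ν) * π / (2 * (1 / C * Φ)), by positivity,
    fun g hgc hgE hgb => ?_⟩
  have hfm : AEStronglyMeasurable (fun x => 1 / (x * hInv μ ν g x * hInvDeriv μ ν g x))
      (volume.restrict (Ioi 0)) :=
    (measurable_const.div ((measurable_id.mul (continuous_hInv hν hgc).measurable).mul
      (measurable_hInvDeriv hgc.measurable))).aestronglyMeasurable
  obtain ⟨hlow, hupp⟩ := ((hS g hgc hgb).const_div_brokenPow hc zero_le_one (k := 1)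
    ⟨le_rfl, le_rfl⟩).setIntegral measurableSet_Ioi (by positivity)
    (fun x hx => (brokenPow_pos hx).le) (integrableOn_brokenPow ha hb) hfm
  rw [← hΦ_def] at hlow hupp
  have hI := integral_eq_two_mul_setIntegral_Ioi_of_even
    (f := fun x => 1 / (x * hInv μ ν g x * hInvDeriv μ ν g x))
    fun x => by simp only [hInv_neg hgE, hInvDeriv_neg hgE, neg_mul_neg]
  have hpos : 0 < 1 / C * Φ := by positivity
  unfold kappa
  rw [hI]
  exact ⟨div_le_div_of_nonneg_left hA.le (by linarith) (by linarith),
    div_le_div_of_nonneg_left hA.le (by linarith) (by linarith)⟩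

theorem exists_comparable_Bfun (hμ : 1 / 2 < μ) (hν : 0 < ν) (hν2 : ν < 1 / 2) (M : ℝ) :
    ∃ c₁ c₂, 0 < c₁ ∧ c₁ ≤ c₂ ∧ ∀ g : ℝ → ℝ, Continuous g → (∀ x, g (-x) = g x) →
      (∀ x, |g x| ≤ M) →
        Comparable (Ioi 0) c₁ c₂ (brokenPow (1 - 3 * ν) (1 - 3 * μ)) (Bfun μ ν g) := by
  obtain ⟨l, L, hl, hκ⟩ := exists_kappa_mem_Icc hμ hν hν2 M
  obtain ⟨c, C, hc, hC, hS⟩ :=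
    exists_comparable_mul_hInv_mul_hInvDeriv_pow (μ := μ) hν (by linarith) M 2
  refine ⟨l / C, max (L / c) (l / C), div_pos hl hC, le_max_right _ _,
    fun g hgc hgE hgb => ?_⟩
  convert ((hS g hgc hgb).const_div_brokenPow hc hl.le (hκ g hgc hgE hgb)).mono le_rfl
    (le_max_left _ _) (fun x hx => (brokenPow_pos hx).le) using 2 <;>
  first | rfl | (push_cast; ring)

end Uniform

theorem statement18_general (μ ν : ℝ) (hμ1 : 1 / 2 < μ) (hν1 : 0 < ν) (hν2 : ν < 1 / 2)
    (M : ℝ) :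
    ∃ c₁ c₂ : ℝ, 0 < c₁ ∧ c₁ ≤ c₂ ∧
      ∀ g : ℝ → ℝ, Continuous g →
        Filter.Tendsto g Filter.atTop (nhds 0) → Filter.Tendsto g Filter.atBot (nhds 0) →
        (∀ x : ℝ, Gfun μ ν g (-x) = Gfun μ ν g x) →
        (∀ x y : ℝ, 0 < y → y ≤ x →
          0 ≤ Gfun μ ν g x - Gfun μ ν g y ∧
          Gfun μ ν g x - Gfun μ ν g y ≤ (μ - ν) * (Real.log (x / y) + 2)) →
        (∀ x : ℝ, |g x| ≤ M) →
        (∀ x : ℝ, 0 < |x| → |x| ≤ 1 →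
          c₁ * |x| ^ (1 - 3 * ν) ≤ Bfun μ ν g x ∧ Bfun μ ν g x ≤ c₂ * |x| ^ (1 - 3 * ν)) ∧
        (∀ x : ℝ, 1 ≤ |x| →
          c₁ * |x| ^ (1 - 3 * μ) ≤ Bfun μ ν g x ∧ Bfun μ ν g x ≤ c₂ * |x| ^ (1 - 3 * μ)) := by
  obtain ⟨c₁, c₂, hc₁, hc₁₂, hB⟩ := exists_comparable_Bfun hμ1 hν1 hν2 M
  refine ⟨c₁, c₂, hc₁, hc₁₂, fun g hgc _ _ hG _ hgb => ?_⟩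
  have hgE := even_of_Gfun_even hG
  have hB' (x : ℝ) (hx : 0 < |x|) := Bfun_abs hgE x ▸ hB g hgc hgE hgb |x| hx
  exact ⟨fun x hx0 hx1 => by simpa only [brokenPow_of_le_one hx1] using hB' x hx0,
    fun x hx => by simpa only [brokenPow_of_one_le hx] using hB' x (one_pos.trans_le hx)⟩

/-- Two-sided power-law bounds for `B = b' ∘ h⁻¹` (used in Section 4): for `g ∈ X₁` with
`‖g‖_∞ ≤ M`, `B(x) ≍ |x|^(1−3ν)` for `0 < |x| ≤ 1` and `B(x) ≍ |x|^(1−3μ)` for `|x| ≥ 1`. -/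
theorem statement18 (μ ν : ℝ) (hμ1 : 1 / 2 < μ) (hμ2 : μ ≤ 2) (hν1 : 0 < ν) (hν2 : ν < 1 / 2)
    (M : ℝ) (hM : 0 < M) :
    ∃ c₁ c₂ : ℝ, 0 < c₁ ∧ c₁ ≤ c₂ ∧
      ∀ g : ℝ → ℝ, Continuous g →
        Filter.Tendsto g Filter.atTop (nhds 0) → Filter.Tendsto g Filter.atBot (nhds 0) →
        (∀ x : ℝ, Gfun μ ν g (-x) = Gfun μ ν g x) →
        (∀ x y : ℝ, 0 < y → y ≤ x →
          0 ≤ Gfun μ ν g x - Gfun μ ν g y ∧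
          Gfun μ ν g x - Gfun μ ν g y ≤ (μ - ν) * (Real.log (x / y) + 2)) →
        (∀ x : ℝ, |g x| ≤ M) →
        (∀ x : ℝ, 0 < |x| → |x| ≤ 1 →
          c₁ * |x| ^ (1 - 3 * ν) ≤ Bfun μ ν g x ∧ Bfun μ ν g x ≤ c₂ * |x| ^ (1 - 3 * ν)) ∧
        (∀ x : ℝ, 1 ≤ |x| →
          c₁ * |x| ^ (1 - 3 * μ) ≤ Bfun μ ν g x ∧ Bfun μ ν g x ≤ c₂ * |x| ^ (1 - 3 * μ)) :=
  statement18_general μ ν hμ1 hν1 hν2 M
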